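/- arXiv:2201.06285 — 6 statements merged into one kernel-verified Lean document; each statement's English description precedes it below -/
import Mathlib

section
/- As the vaccination rate p tends to infinity, the basic reproduction number of the native strain R₁(p) tends to δ₁·R₁wv, and R₁(p) > δ₁·R₁wv for all p ≥ 0 (when δ₁ < 1). Consequently, if δ₁R₁wv > 1, then R₁(p) > 1 for every p ≥ 0, i.e., no amount of vaccination can bring R₁ below one. -/
/-!
Writing `c = γ + μ`, the formula factors as `R₁(p) = R₁wv · (c + δ₁ p) / (p + c)`, and
`(c + δ p) / (p + c) = δ + (1 - δ) c / (p + c)`. The correction term is positive for `p ≥ 0`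
when `δ < 1` and decays like `1 / p`, which gives both the limit and the strict lower bound.
-/

open Filter Topology

noncomputable def vaccinationFactor (c δ p : ℝ) : ℝ := (c + p * δ) / (p + c)

section vaccinationFactor

variable {c δ p : ℝ}

theorem vaccinationFactor_eq_add_div (hpc : p + c ≠ 0) :
    vaccinationFactor c δ p = δ + (1 - δ) * c / (p + c) := by
  unfold vaccinationFactor
  field_simp
  ring

theorem lt_vaccinationFactor (hc : 0 < c) (hδ : δ < 1) (hp : 0 ≤ p) :
    δ < vaccinationFactor c δ p := by
  have hpc : 0 < p + c := by linarith
  rw [vaccinationFactor_eq_add_div hpc.ne']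
  have : 0 < (1 - δ) * c / (p + c) := by
    have : 0 < 1 - δ := by linarith
    positivity
  linarith

theorem tendsto_vaccinationFactor_atTop (c δ : ℝ) :
    Tendsto (vaccinationFactor c δ) atTop (𝓝 δ) := by
  have hshift : Tendsto (fun p : ℝ => p + c) atTop atTop :=
    tendsto_atTop_add_const_right _ c tendsto_id
  have hdecay : Tendsto (fun p : ℝ => δ + (1 - δ) * c / (p + c)) atTop (𝓝 (δ + 0)) :=
    tendsto_const_nhds.add (tendsto_const_nhds.div_atTop hshift)
  rw [add_zero] at hdecay
  refine hdecay.congr' ?_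
  filter_upwards [hshift.eventually_gt_atTop 0] with p hpc
  exact (vaccinationFactor_eq_add_div hpc.ne').symm

end vaccinationFactor

theorem R1_limit_vaccination_general (Λ β₁ a₁ μ γ d₁ α₁ ν₁ δ₁ : ℝ)
    (hΛ : 0 < Λ) (hβ₁ : 0 < β₁) (ha₁ : 0 < a₁) (hμ : 0 < μ) (hγ : 0 < γ)
    (hd₁ : 0 < d₁) (hα₁ : 0 < α₁) (hν₁ : 0 < ν₁) (hδ₁1 : δ₁ < 1)
    (R₁ : ℝ → ℝ) (R₁wv : ℝ)
    (hR₁ : ∀ p, R₁ p = Λ * β₁ * a₁ * (γ + μ + p * δ₁) /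
      (μ * (μ + a₁) * (μ + d₁ + α₁ + ν₁) * (p + γ + μ)))
    (hR₁wv : R₁wv = Λ * β₁ * a₁ / (μ * (μ + a₁) * (μ + d₁ + α₁ + ν₁))) :
    Filter.Tendsto R₁ Filter.atTop (nhds (δ₁ * R₁wv)) ∧
    (∀ p ≥ (0:ℝ), δ₁ * R₁wv < R₁ p) ∧
    (δ₁ * R₁wv > 1 → ∀ p ≥ (0:ℝ), 1 < R₁ p) := by
  have hR₁wv_pos : 0 < R₁wv := by rw [hR₁wv]; positivity
  have hR₁_eq : R₁ = fun p => R₁wv * vaccinationFactor (γ + μ) δ₁ p := by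
    funext p
    rw [hR₁, hR₁wv, vaccinationFactor, add_assoc p, mul_div_mul_comm]
  have hbound : ∀ p ≥ (0:ℝ), δ₁ * R₁wv < R₁ p := fun p hp => by
    rw [hR₁_eq, mul_comm δ₁]
    exact mul_lt_mul_of_pos_left (lt_vaccinationFactor (by positivity) hδ₁1 hp) hR₁wv_pos
  refine ⟨?_, hbound, fun h p hp => h.trans (hbound p hp)⟩
  rw [hR₁_eq, mul_comm δ₁]
  exact (tendsto_vaccinationFactor_atTop _ _).const_mul R₁wv

/-- As `p → ∞`, `R₁(p) → δ₁ R₁wv`; `R₁(p) > δ₁ R₁wv` for all `p ≥ 0`; hence if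
    `δ₁ R₁wv > 1`, no amount of vaccination brings `R₁` below one. -/
theorem R1_limit_vaccination (Λ β₁ a₁ μ γ d₁ α₁ ν₁ δ₁ : ℝ)
    (hΛ : 0 < Λ) (hβ₁ : 0 < β₁) (ha₁ : 0 < a₁) (hμ : 0 < μ) (hγ : 0 < γ)
    (hd₁ : 0 < d₁) (hα₁ : 0 < α₁) (hν₁ : 0 < ν₁) (hδ₁0 : 0 ≤ δ₁) (hδ₁1 : δ₁ < 1)
    (R₁ : ℝ → ℝ) (R₁wv : ℝ)
    (hR₁ : ∀ p, R₁ p = Λ * β₁ * a₁ * (γ + μ + p * δ₁) /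
      (μ * (μ + a₁) * (μ + d₁ + α₁ + ν₁) * (p + γ + μ)))
    (hR₁wv : R₁wv = Λ * β₁ * a₁ / (μ * (μ + a₁) * (μ + d₁ + α₁ + ν₁))) :
    Filter.Tendsto R₁ Filter.atTop (nhds (δ₁ * R₁wv)) ∧
    (∀ p ≥ (0:ℝ), δ₁ * R₁wv < R₁ p) ∧
    (δ₁ * R₁wv > 1 → ∀ p ≥ (0:ℝ), 1 < R₁ p) :=
  R1_limit_vaccination_general Λ β₁ a₁ μ γ d₁ α₁ ν₁ δ₁ hΛ hβ₁ ha₁ hμ hγ hd₁ hα₁ hν₁ hδ₁1 R₁ R₁wv hR₁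
    hR₁wv
end

section
/- Suppose δ₁R₁wv < 1 and R₁wv > 1. Then R₁(p) < 1 if and only if p > p₁* := (γ+μ)(R₁wv - 1)/(1 - δ₁R₁wv). -/
/-- With `δ₁ R₁wv < 1` and `R₁wv > 1`: `R₁(p) < 1` iff `p > (γ+μ)(R₁wv-1)/(1-δ₁R₁wv)`. -/
theorem critical_vaccination_rate (Λ β₁ a₁ μ γ d₁ α₁ ν₁ δ₁ p : ℝ)
    (hΛ : 0 < Λ) (hβ₁ : 0 < β₁) (ha₁ : 0 < a₁) (hμ : 0 < μ) (hγ : 0 < γ)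
    (hd₁ : 0 < d₁) (hα₁ : 0 < α₁) (hν₁ : 0 < ν₁) (hδ₁0 : 0 ≤ δ₁) (hδ₁1 : δ₁ < 1)
    (hp : 0 ≤ p)
    (R₁wv : ℝ)
    (hR₁wv : R₁wv = Λ * β₁ * a₁ / (μ * (μ + a₁) * (μ + d₁ + α₁ + ν₁)))
    (hsub : δ₁ * R₁wv < 1) (hsup : 1 < R₁wv)
    (R₁ : ℝ)
    (hR₁ : R₁ = Λ * β₁ * a₁ * (γ + μ + p * δ₁) /
      (μ * (μ + a₁) * (μ + d₁ + α₁ + ν₁) * (p + γ + μ))) :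
    R₁ < 1 ↔ p > (γ + μ) * (R₁wv - 1) / (1 - δ₁ * R₁wv) := by
  have hD : 0 < μ * (μ + a₁) * (μ + d₁ + α₁ + ν₁) := by positivity
  have hpgm : 0 < p + γ + μ := by linarith
  have hRw : R₁wv * (μ * (μ + a₁) * (μ + d₁ + α₁ + ν₁)) = Λ * β₁ * a₁ := by
    rw [hR₁wv]; field_simp
  have hR₁' : R₁ = R₁wv * (γ + μ + p * δ₁) / (p + γ + μ) := by
    rw [hR₁, ← hRw]; field_simp
  have h1 : 0 < 1 - δ₁ * R₁wv := by linarith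
  rw [hR₁', div_lt_one hpgm, gt_iff_lt, div_lt_iff₀ h1]
  constructor <;> intro h <;> nlinarith
end

section
/- If R₂ = 1 (equivalently Λβ₂a₂(γ+μ+pδ₂) = μ(μ+a₂)(μ+d₂+α₂)(p+γ+μ)), then k₂' = β₂((μ+a₂)(μ+d₂+α₂)(γ+μ+(p+μ)δ₂) - Λβ₂a₂δ₂) > 0. Consequently, when R₂ ≤ 1 the quadratic k₁'I² + k₂'I + k₃' = 0 has no positive root, and the model has no mutant dominant equilibrium. -/
theorem quadratic_ne_zero_of_pos {R : Type*} [Semiring R] [PartialOrder R]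
    [IsStrictOrderedRing R] {a b c x : R} (ha : 0 ≤ a) (hb : 0 < b) (hc : 0 ≤ c) (hx : 0 < x) :
    a * x ^ 2 + b * x + c ≠ 0 :=
  ne_of_gt (by positivity)

/-- Here `A = Λβ₂a₂` and `D = (μ + a₂)(μ + d₂ + α₂)`: the hypothesis is `R₂ ≤ 1` with the
denominator cleared, and the conclusion is `k₂' / β₂ > 0`. -/
theorem sub_pos_of_reproduction_le_one {A D γ μ p δ : ℝ} (hD : 0 < D) (hγ : 0 < γ)
    (hμ : 0 < μ) (hp : 0 < p) (hδ : 0 < δ)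
    (hR : A * (γ + μ + p * δ) ≤ μ * D * (p + γ + μ)) :
    0 < D * (γ + μ + (p + μ) * δ) - A * δ := by
  have hX : 0 < γ + μ + p * δ := by positivity
  have hgap : μ * δ * (p + γ + μ) < (γ + μ + (p + μ) * δ) * (γ + μ + p * δ) := by
    have expand : (γ + μ + (p + μ) * δ) * (γ + μ + p * δ) - μ * δ * (p + γ + μ) =
        (γ + μ) ^ 2 + (p * δ) ^ 2 + μ * p * δ ^ 2 + 2 * γ * p * δ + μ * p * δ := by ring
    have : 0 < (γ + μ) ^ 2 + (p * δ) ^ 2 + μ * p * δ ^ 2 + 2 * γ * p * δ + μ * p * δ := by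
      positivity
    linarith
  have key : A * δ * (γ + μ + p * δ) < D * (γ + μ + (p + μ) * δ) * (γ + μ + p * δ) :=
    calc A * δ * (γ + μ + p * δ) = δ * (A * (γ + μ + p * δ)) := by ring
      _ ≤ δ * (μ * D * (p + γ + μ)) := mul_le_mul_of_nonneg_left hR hδ.le
      _ = D * (μ * δ * (p + γ + μ)) := by ring
      _ < D * ((γ + μ + (p + μ) * δ) * (γ + μ + p * δ)) := mul_lt_mul_of_pos_left hgap hD
      _ = D * (γ + μ + (p + μ) * δ) * (γ + μ + p * δ) := by ring
  exact sub_pos.2 (lt_of_mul_lt_mul_right key hX.le)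

theorem no_mutant_equilibrium_general (Λ β₂ a₂ μ γ p d₂ α₂ δ₂ : ℝ)
    (hβ₂ : 0 < β₂) (ha₂ : 0 < a₂) (hμ : 0 < μ) (hγ : 0 < γ)
    (hp : 0 < p) (hd₂ : 0 < d₂) (hα₂ : 0 < α₂) (hδ₂0 : 0 < δ₂)
    (R₂ k₁' k₂' k₃' : ℝ)
    (hR₂ : R₂ = Λ * β₂ * a₂ * (γ + μ + p * δ₂) /
      (μ * (μ + a₂) * (μ + d₂ + α₂) * (p + γ + μ)))
    (hk₁ : k₁' = β₂^2 * (μ + a₂) * (μ + d₂ + α₂) * δ₂)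
    (hk₂ : k₂' = β₂ * ((μ + a₂) * (μ + d₂ + α₂) * (γ + μ + (p + μ) * δ₂) - Λ * β₂ * a₂ * δ₂))
    (hk₃ : k₃' = μ * (μ + a₂) * (μ + d₂ + α₂) * (γ + μ + p) * (1 - R₂)) :
    (R₂ = 1 → 0 < k₂') ∧
    (R₂ ≤ 1 → ∀ x : ℝ, 0 < x → k₁' * x^2 + k₂' * x + k₃' ≠ 0) := by
  have hden : 0 < μ * (μ + a₂) * (μ + d₂ + α₂) * (p + γ + μ) := by positivity
  have hk₂_pos : R₂ ≤ 1 → 0 < k₂' := fun hR => by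
    rw [hR₂, div_le_one hden, mul_assoc μ] at hR
    rw [hk₂]
    exact mul_pos hβ₂ (sub_pos_of_reproduction_le_one (by positivity) hγ hμ hp hδ₂0 hR)
  refine ⟨fun hR => hk₂_pos hR.le, fun hR x hx => ?_⟩
  have hk₃_nonneg : 0 ≤ k₃' := by
    have : 0 ≤ 1 - R₂ := sub_nonneg.2 hR
    rw [hk₃]
    positivity
  exact quadratic_ne_zero_of_pos (by rw [hk₁]; positivity) (hk₂_pos hR) hk₃_nonneg hx

/-- If `R₂ = 1` then `k₂' > 0`; consequently for `R₂ ≤ 1` the quadratic has no positive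
    root, i.e., there is no mutant dominant equilibrium. -/
theorem no_mutant_equilibrium (Λ β₂ a₂ μ γ p d₂ α₂ δ₂ : ℝ)
    (hΛ : 0 < Λ) (hβ₂ : 0 < β₂) (ha₂ : 0 < a₂) (hμ : 0 < μ) (hγ : 0 < γ)
    (hp : 0 < p) (hd₂ : 0 < d₂) (hα₂ : 0 < α₂) (hδ₂0 : 0 < δ₂) (hδ₂1 : δ₂ ≤ 1)
    (R₂ k₁' k₂' k₃' : ℝ)
    (hR₂ : R₂ = Λ * β₂ * a₂ * (γ + μ + p * δ₂) /
      (μ * (μ + a₂) * (μ + d₂ + α₂) * (p + γ + μ)))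
    (hk₁ : k₁' = β₂^2 * (μ + a₂) * (μ + d₂ + α₂) * δ₂)
    (hk₂ : k₂' = β₂ * ((μ + a₂) * (μ + d₂ + α₂) * (γ + μ + (p + μ) * δ₂) - Λ * β₂ * a₂ * δ₂))
    (hk₃ : k₃' = μ * (μ + a₂) * (μ + d₂ + α₂) * (γ + μ + p) * (1 - R₂)) :
    (R₂ = 1 → 0 < k₂') ∧
    (R₂ ≤ 1 → ∀ x : ℝ, 0 < x → k₁' * x^2 + k₂' * x + k₃' ≠ 0) :=
  no_mutant_equilibrium_general Λ β₂ a₂ μ γ p d₂ α₂ δ₂ hβ₂ ha₂ hμ hγ hp hd₂ hα₂ hδ₂0 R₂ k₁' k₂' k₃'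
    hR₂ hk₁ hk₂ hk₃
end

section
/- Let x, y, z, u : ℝ₊. Define G = μS(2 - x - 1/x) + γV(2 - x/y - y/x) + μV(3 - 1/x - y - x/y) + βSI(3 - 1/x - xu/z - z/u) + δβVI(4 - 1/x - x/y - yu/z - z/u) with all coefficients μS, γV, μV, βSI, δβVI nonnegative. Then G ≤ 0, and if μS, μV, βSI > 0 then G = 0 implies x = 1, y = 1, and z = u. -/
/-!
Each bracket of `G` has the form `n - (a₁ + ⋯ + aₙ)` with positive `aᵢ` whose product is `1`, so it
is nonpositive by AM–GM; as the coefficients are nonnegative, `G ≤ 0`. If `G = 0`, every term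
vanishes, and a bracket with positive coefficient vanishes only when its AM–GM is an equality.
Reading the `μS`, `μV` and `βSI` brackets in turn gives `x = 1`, then `y + 1/y = 2`, then
`u/z + z/u = 2`.
-/

open Finset

theorem Real.card_le_sum_of_prod_eq_one {ι : Type*} (s : Finset ι) (a : ι → ℝ)
    (ha : ∀ i ∈ s, 0 ≤ a i) (hprod : ∏ i ∈ s, a i = 1) : (#s : ℝ) ≤ ∑ i ∈ s, a i := by
  rcases s.eq_empty_or_nonempty with rfl | hs
  · simp
  have hcard : (0 : ℝ) < #s := by exact_mod_cast hs.card_pos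
  have hamgm := Real.geom_mean_le_arith_mean_weighted s (fun _ ↦ (#s : ℝ)⁻¹) a
    (fun _ _ ↦ by positivity) (by simp [hcard.ne']) ha
  rw [Real.finsetProd_rpow s a ha, hprod, Real.one_rpow, ← mul_sum] at hamgm
  rwa [← div_eq_inv_mul, one_le_div hcard] at hamgm

theorem three_le_add_add_of_mul_eq_one {p q r : ℝ} (hp : 0 ≤ p) (hq : 0 ≤ q) (hr : 0 ≤ r)
    (h : p * q * r = 1) : 3 ≤ p + q + r := by
  have := Real.card_le_sum_of_prod_eq_one univ ![p, q, r] (by simp [Fin.forall_fin_succ, *])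
    (by simp [Fin.prod_univ_three, h])
  simpa [Fin.sum_univ_three] using this

theorem four_le_add_add_add_of_mul_eq_one {p q r s : ℝ} (hp : 0 ≤ p) (hq : 0 ≤ q) (hr : 0 ≤ r)
    (hs : 0 ≤ s) (h : p * q * r * s = 1) : 4 ≤ p + q + r + s := by
  have := Real.card_le_sum_of_prod_eq_one univ ![p, q, r, s] (by simp [Fin.forall_fin_succ, *])
    (by simp [Fin.prod_univ_four, h])
  simpa [Fin.sum_univ_four] using this

theorem add_inv_sub_two_eq {a : ℝ} (ha : a ≠ 0) : a + a⁻¹ - 2 = (a - 1) ^ 2 / a := by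
  field_simp
  ring

theorem two_le_add_inv {a : ℝ} (ha : 0 < a) : 2 ≤ a + a⁻¹ := by
  have hsq : 0 ≤ (a - 1) ^ 2 / a := by positivity
  linarith [add_inv_sub_two_eq ha.ne']

theorem add_inv_eq_two_iff {a : ℝ} (ha : a ≠ 0) : a + a⁻¹ = 2 ↔ a = 1 := by
  rw [← sub_eq_zero, add_inv_sub_two_eq ha, div_eq_zero_iff, sq_eq_zero_iff, sub_eq_zero]
  exact or_iff_left ha

/-- Lyapunov derivative estimate for the mutant dominant equilibrium: `G ≤ 0`, and with
    positive coefficients `μS, μV, βSI`, `G = 0` forces `x = 1, y = 1, z = u`. -/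
theorem lyapunov_mutant (μS γV μV βSI δβVI x y z u G : ℝ)
    (hμS : 0 ≤ μS) (hγV : 0 ≤ γV) (hμV : 0 ≤ μV) (hβSI : 0 ≤ βSI) (hδβVI : 0 ≤ δβVI)
    (hx : 0 < x) (hy : 0 < y) (hz : 0 < z) (hu : 0 < u)
    (hG : G = μS * (2 - x - 1/x) + γV * (2 - x/y - y/x) + μV * (3 - 1/x - y - x/y)
      + βSI * (3 - 1/x - x*u/z - z/u) + δβVI * (4 - 1/x - x/y - y*u/z - z/u)) :
    G ≤ 0 ∧ (0 < μS → 0 < μV → 0 < βSI → G = 0 → x = 1 ∧ y = 1 ∧ z = u) := by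
  have hS : 2 ≤ x + 1/x := by simpa only [one_div] using two_le_add_inv hx
  have hγ : 2 ≤ x/y + y/x := by simpa only [inv_div] using two_le_add_inv (div_pos hx hy)
  have hV : 3 ≤ 1/x + y + x/y :=
    three_le_add_add_of_mul_eq_one (by positivity) hy.le (by positivity) (by field_simp)
  have hB : 3 ≤ 1/x + x*u/z + z/u :=
    three_le_add_add_of_mul_eq_one (by positivity) (by positivity) (by positivity)
      (by field_simp)
  have hD : 4 ≤ 1/x + x/y + y*u/z + z/u :=
    four_le_add_add_add_of_mul_eq_one (by positivity) (by positivity) (by positivity)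
      (by positivity) (by field_simp)
  have eS : μS * (2 - x - 1/x) ≤ 0 := mul_nonpos_of_nonneg_of_nonpos hμS (by linarith)
  have eγ : γV * (2 - x/y - y/x) ≤ 0 := mul_nonpos_of_nonneg_of_nonpos hγV (by linarith)
  have eV : μV * (3 - 1/x - y - x/y) ≤ 0 := mul_nonpos_of_nonneg_of_nonpos hμV (by linarith)
  have eB : βSI * (3 - 1/x - x*u/z - z/u) ≤ 0 :=
    mul_nonpos_of_nonneg_of_nonpos hβSI (by linarith)
  have eD : δβVI * (4 - 1/x - x/y - y*u/z - z/u) ≤ 0 :=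
    mul_nonpos_of_nonneg_of_nonpos hδβVI (by linarith)
  refine ⟨by linarith, fun hμS' hμV' hβSI' hG0 ↦ ?_⟩
  have zS : 2 - x - 1/x = 0 := (mul_eq_zero_iff_left hμS'.ne').1 (by linarith)
  have zV : 3 - 1/x - y - x/y = 0 := (mul_eq_zero_iff_left hμV'.ne').1 (by linarith)
  have zB : 3 - 1/x - x*u/z - z/u = 0 := (mul_eq_zero_iff_left hβSI'.ne').1 (by linarith)
  obtain rfl : x = 1 := (add_inv_eq_two_iff hx.ne').1 (by rw [← one_div]; linarith)
  obtain rfl : y = 1 := (add_inv_eq_two_iff hy.ne').1 (by rw [← one_div]; linarith)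
  rw [one_mul] at zB
  have hzu : u / z = 1 := (add_inv_eq_two_iff (div_pos hu hz).ne').1 (by rw [inv_div]; linarith)
  exact ⟨rfl, rfl, ((div_eq_one_iff_eq hz.ne').1 hzu).symm⟩
end

section
/- Let F(x,y,z,u,v,w) = μS(2-x-1/x) + γV(2-x/y-y/x) + μV(3-y-1/x-x/y) + β₁SI₁(3-1/x-xv/z-z/v) + β₂SI₂(3-1/x-xw/u-u/w) + δ₂β₂VI₂(4-1/x-x/y-yw/u-u/w) + δ₁β₁VI₁(4-1/x-x/y-yv/z-z/v), where all parameter coefficients are nonnegative and x,y,z,u,v,w > 0. Then F ≤ 0; and if the coefficients μS, μV, β₁SI₁, β₂SI₂ are strictly positive, F = 0 implies x = y = 1, z = v, u = w. -/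
private lemma key2' (a b : ℝ) (ha : 0 < a) (hb : 0 < b) : 3*a*b ≤ a^2*b + a*b^2 + 1 := by
  nlinarith [sq_nonneg (a-b), sq_nonneg (a*b-1), sq_nonneg (a-1), sq_nonneg (b-1),
    mul_pos ha hb, sq_nonneg (a+b-2)]

private lemma amgm3' (a b c : ℝ) (ha : 0 < a) (hb : 0 < b) (hc : 0 < c) (h : a*b*c = 1) :
    3 ≤ a + b + c := by
  rw [← mul_le_mul_iff_of_pos_right (show (0:ℝ) < a*b by positivity)]
  have hc' : c * (a*b) = 1 := by linarith [h, mul_comm (a*b) c]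
  nlinarith [key2' a b ha hb]

private lemma amgm2' (a b : ℝ) (ha : 0 ≤ a) (hb : 0 ≤ b) : 2 * Real.sqrt (a*b) ≤ a + b := by
  nlinarith [sq_nonneg (Real.sqrt a - Real.sqrt b), Real.sq_sqrt ha, Real.sq_sqrt hb,
    Real.sqrt_mul ha b, Real.sqrt_nonneg a, Real.sqrt_nonneg b]

private lemma amgm4' (a b c d : ℝ) (ha : 0 < a) (hb : 0 < b) (hc : 0 < c) (hd : 0 < d)
    (h : a*b*c*d = 1) : 4 ≤ a + b + c + d := by
  have h1 := amgm2' a b ha.le hb.le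
  have h2 := amgm2' c d hc.le hd.le
  have h3 := amgm2' (Real.sqrt (a*b)) (Real.sqrt (c*d)) (Real.sqrt_nonneg _) (Real.sqrt_nonneg _)
  have h4 : Real.sqrt (a*b) * Real.sqrt (c*d) = 1 := by
    rw [← Real.sqrt_mul (by positivity), show a*b*(c*d) = a*b*c*d by ring, h, Real.sqrt_one]
  rw [h4, Real.sqrt_one] at h3
  linarith


private lemma eq_one_of (t : ℝ) (ht : 0 < t) (h : 2 - t - 1/t = 0) : t = 1 := by
  have h2 : (t-1)^2 = 0 := by
    field_simp at h
    nlinarith [h]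
  have := pow_eq_zero_iff (n := 2) (by norm_num) |>.mp h2
  linarith

private lemma eq_of (p q : ℝ) (hp : 0 < p) (hq : 0 < q) (h : 2 - p/q - q/p = 0) : p = q := by
  have h2 : (p-q)^2 = 0 := by
    field_simp at h
    nlinarith [h]
  have := pow_eq_zero_iff (n := 2) (by norm_num) |>.mp h2
  linarith

/-- Lyapunov derivative estimate for the coexistence equilibrium: `F ≤ 0`, and with
    positive coefficients `μS, μV, β₁SI₁, β₂SI₂`, `F = 0` forces
    `x = y = 1`, `z = v`, `u = w`. -/
theorem lyapunov_coexistence (μS γV μV β₁SI₁ β₂SI₂ δ₂β₂VI₂ δ₁β₁VI₁ x y z u v w F : ℝ)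
    (hμS : 0 ≤ μS) (hγV : 0 ≤ γV) (hμV : 0 ≤ μV) (hβ₁ : 0 ≤ β₁SI₁) (hβ₂ : 0 ≤ β₂SI₂)
    (hδ₂ : 0 ≤ δ₂β₂VI₂) (hδ₁ : 0 ≤ δ₁β₁VI₁)
    (hx : 0 < x) (hy : 0 < y) (hz : 0 < z) (hu : 0 < u) (hv : 0 < v) (hw : 0 < w)
    (hF : F = μS * (2 - x - 1/x) + γV * (2 - x/y - y/x) + μV * (3 - y - 1/x - x/y)
      + β₁SI₁ * (3 - 1/x - x*v/z - z/v) + β₂SI₂ * (3 - 1/x - x*w/u - u/w)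
      + δ₂β₂VI₂ * (4 - 1/x - x/y - y*w/u - u/w)
      + δ₁β₁VI₁ * (4 - 1/x - x/y - y*v/z - z/v)) :
    F ≤ 0 ∧ (0 < μS → 0 < μV → 0 < β₁SI₁ → 0 < β₂SI₂ → F = 0 →
      x = 1 ∧ y = 1 ∧ z = v ∧ u = w) := by
  have hA : 2 - x - 1/x ≤ 0 := by
    have : 2 - x - 1/x = -((x-1)^2/x) := by field_simp; ring
    rw [this]; exact neg_nonpos.mpr (by positivity)
  have hB : 2 - x/y - y/x ≤ 0 := by
    have : 2 - x/y - y/x = -((x-y)^2/(x*y)) := by field_simp; ring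
    rw [this]; exact neg_nonpos.mpr (by positivity)
  have hC : 3 - y - 1/x - x/y ≤ 0 := by
    have := amgm3' y (1/x) (x/y) hy (by positivity) (by positivity)
      (by field_simp)
    linarith
  have hD : 3 - 1/x - x*v/z - z/v ≤ 0 := by
    have := amgm3' (1/x) (x*v/z) (z/v) (by positivity) (by positivity) (by positivity)
      (by field_simp)
    linarith
  have hE : 3 - 1/x - x*w/u - u/w ≤ 0 := by
    have := amgm3' (1/x) (x*w/u) (u/w) (by positivity) (by positivity) (by positivity)
      (by field_simp)
    linarith
  have hG : 4 - 1/x - x/y - y*w/u - u/w ≤ 0 := by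
    have := amgm4' (1/x) (x/y) (y*w/u) (u/w) (by positivity) (by positivity)
      (by positivity) (by positivity) (by field_simp)
    linarith
  have hH : 4 - 1/x - x/y - y*v/z - z/v ≤ 0 := by
    have := amgm4' (1/x) (x/y) (y*v/z) (z/v) (by positivity) (by positivity)
      (by positivity) (by positivity) (by field_simp)
    linarith
  have t1 : μS * (2 - x - 1/x) ≤ 0 := mul_nonpos_of_nonneg_of_nonpos hμS hA
  have t2 : γV * (2 - x/y - y/x) ≤ 0 := mul_nonpos_of_nonneg_of_nonpos hγV hB
  have t3 : μV * (3 - y - 1/x - x/y) ≤ 0 := mul_nonpos_of_nonneg_of_nonpos hμV hC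
  have t4 : β₁SI₁ * (3 - 1/x - x*v/z - z/v) ≤ 0 := mul_nonpos_of_nonneg_of_nonpos hβ₁ hD
  have t5 : β₂SI₂ * (3 - 1/x - x*w/u - u/w) ≤ 0 := mul_nonpos_of_nonneg_of_nonpos hβ₂ hE
  have t6 : δ₂β₂VI₂ * (4 - 1/x - x/y - y*w/u - u/w) ≤ 0 := mul_nonpos_of_nonneg_of_nonpos hδ₂ hG
  have t7 : δ₁β₁VI₁ * (4 - 1/x - x/y - y*v/z - z/v) ≤ 0 := mul_nonpos_of_nonneg_of_nonpos hδ₁ hH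
  constructor
  · linarith [hF]
  · intro pμS pμV pβ₁ pβ₂ hF0
    rw [hF0] at hF
    have e1 : μS * (2 - x - 1/x) = 0 := le_antisymm t1 (by linarith)
    have e3 : μV * (3 - y - 1/x - x/y) = 0 := le_antisymm t3 (by linarith)
    have e4 : β₁SI₁ * (3 - 1/x - x*v/z - z/v) = 0 := le_antisymm t4 (by linarith)
    have e5 : β₂SI₂ * (3 - 1/x - x*w/u - u/w) = 0 := le_antisymm t5 (by linarith)
    have bA : 2 - x - 1/x = 0 := by
      rcases mul_eq_zero.mp e1 with h | h
      · exact absurd h pμS.ne'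
      · exact h
    have hx1 : x = 1 := eq_one_of x hx (by linarith)
    subst hx1
    have bC : 3 - y - 1/(1:ℝ) - 1/y = 0 := by
      rcases mul_eq_zero.mp e3 with h | h
      · exact absurd h pμV.ne'
      · simpa using h
    have hy1 : y = 1 := eq_one_of y hy (by rw [div_one] at bC; linarith [bC, (one_div y).symm])
    have bD : 3 - 1/(1:ℝ) - v/z - z/v = 0 := by
      rcases mul_eq_zero.mp e4 with h | h
      · exact absurd h pβ₁.ne'
      · simpa using h
    have hzv : z = v := eq_of z v hz hv (by rw [div_one] at bD; linarith)
    have bE : 3 - 1/(1:ℝ) - w/u - u/w = 0 := by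
      rcases mul_eq_zero.mp e5 with h | h
      · exact absurd h pβ₂.ne'
      · simpa using h
    have huw : u = w := eq_of u w hu hw (by rw [div_one] at bE; linarith)
    exact ⟨rfl, hy1, hzv, huw⟩
end

section
/- If R₁ < 1 and R₂ < 1, then every root of the characteristic polynomial (λ+μ)²(λ+p+γ+μ)(λ² + λ(2μ+a₁+d₁+α₁+ν₁) + (μ+a₁)(μ+d₁+α₁+ν₁)(1-R₁))(λ² + λ(2μ+a₂+d₂+α₂) + (μ+a₂)(μ+d₂+α₂)(1-R₂)) has negative real part. If R₁ > 1 or R₂ > 1, the polynomial has a root with positive real part. -/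
/-- Quadratic with positive real coefficients: all complex roots have negative real part. -/
lemma quad_neg_re (b c : ℝ) (hb : 0 < b) (hc : 0 < c) (l : ℂ)
    (h : l^2 + l * (b:ℂ) + (c:ℂ) = 0) : l.re < 0 := by
  by_contra hx
  push_neg at hx
  have hre : l.re^2 - l.im^2 + l.re * b + c = 0 := by
    have := congrArg Complex.re h
    simpa [Complex.add_re, Complex.mul_re, pow_two, Complex.ofReal_re,
      Complex.ofReal_im] using this
  have him : l.im * (2 * l.re + b) = 0 := by
    have := congrArg Complex.im h
    simp [Complex.add_im, Complex.mul_im, pow_two, Complex.ofReal_re,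
      Complex.ofReal_im] at this
    ring_nf
    ring_nf at this
    linarith
  rcases mul_eq_zero.mp him with h0 | h0
  · rw [h0] at hre
    nlinarith
  · nlinarith

/-- Quadratic with negative constant term has a positive real root. -/
lemma quad_pos_root (b c : ℝ) (hc : c < 0) :
    ∃ x : ℝ, 0 < x ∧ x^2 + x * b + c = 0 := by
  refine ⟨(-b + Real.sqrt (b^2 - 4*c)) / 2, ?_, ?_⟩
  · have h1 : b^2 < b^2 - 4*c := by linarith
    have h2 : b < Real.sqrt (b^2 - 4*c) := by
      have := Real.sqrt_lt_sqrt (by positivity) h1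
      have hb : b ≤ Real.sqrt (b^2) := by
        rw [Real.sqrt_sq_eq_abs]; exact le_abs_self b
      linarith
    linarith
  · have hs : Real.sqrt (b^2 - 4*c) ^ 2 = b^2 - 4*c :=
      Real.sq_sqrt (by nlinarith)
    nlinarith [hs]

/-- Root location of the full characteristic polynomial at the disease-free equilibrium:
    stable (all roots with negative real part) iff `max{R₁,R₂} < 1`, unstable root with
    positive real part if `R₁ > 1` or `R₂ > 1`. -/
theorem dfe_characteristic_roots (μ p γ a₁ a₂ d₁ d₂ α₁ α₂ ν₁ R₁ R₂ : ℝ)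
    (hμ : 0 < μ) (hp : 0 < p) (hγ : 0 < γ) (ha₁ : 0 < a₁) (ha₂ : 0 < a₂)
    (hd₁ : 0 < d₁) (hd₂ : 0 < d₂) (hα₁ : 0 < α₁) (hα₂ : 0 < α₂) (hν₁ : 0 < ν₁)
    (hR₁ : 0 < R₁) (hR₂ : 0 < R₂)
    (P : ℂ → ℂ)
    (hP : ∀ l : ℂ, P l = (l + (μ:ℂ))^2 * (l + (p:ℂ) + (γ:ℂ) + (μ:ℂ))
      * (l^2 + l * ((2*μ + a₁ + d₁ + α₁ + ν₁ : ℝ) : ℂ)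
          + (((μ + a₁) * (μ + d₁ + α₁ + ν₁) * (1 - R₁) : ℝ) : ℂ))
      * (l^2 + l * ((2*μ + a₂ + d₂ + α₂ : ℝ) : ℂ)
          + (((μ + a₂) * (μ + d₂ + α₂) * (1 - R₂) : ℝ) : ℂ))) :
    (R₁ < 1 → R₂ < 1 → ∀ l : ℂ, P l = 0 → l.re < 0) ∧
    (1 < R₁ ∨ 1 < R₂ → ∃ l : ℂ, P l = 0 ∧ 0 < l.re) := by
  constructor
  · intro h1 h2 l hl
    rw [hP] at hl
    rcases mul_eq_zero.mp hl with hl | hq2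
    rcases mul_eq_zero.mp hl with hl | hq1
    rcases mul_eq_zero.mp hl with hl | hlin
    · have : l + (μ:ℂ) = 0 := by
        exact pow_eq_zero_iff (n := 2) (by norm_num) |>.mp hl
      have : l = -(μ:ℂ) := by linear_combination this
      rw [this]; simpa using hμ
    · have : l = -((p:ℝ)+(γ:ℝ)+(μ:ℝ) : ℂ) := by push_cast; linear_combination hlin
      rw [this]
      simp only [Complex.neg_re, Complex.add_re, Complex.ofReal_re]
      linarith
    · exact quad_neg_re _ _ (by positivity)
        (mul_pos (mul_pos (by linarith) (by linarith)) (by linarith)) l hq1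
    · exact quad_neg_re _ _ (by positivity)
        (mul_pos (mul_pos (by linarith) (by linarith)) (by linarith)) l hq2
  · intro h
    rcases h with h | h
    · obtain ⟨x, hx, hroot⟩ := quad_pos_root (2*μ + a₁ + d₁ + α₁ + ν₁)
        ((μ + a₁) * (μ + d₁ + α₁ + ν₁) * (1 - R₁))
        (mul_neg_of_pos_of_neg (mul_pos (by linarith) (by linarith)) (by linarith))
      refine ⟨(x:ℂ), ?_, by simpa using hx⟩
      rw [hP]
      have : ((x:ℂ))^2 + (x:ℂ) * ((2*μ + a₁ + d₁ + α₁ + ν₁ : ℝ) : ℂ)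
          + (((μ + a₁) * (μ + d₁ + α₁ + ν₁) * (1 - R₁) : ℝ) : ℂ) = 0 := by
        push_cast
        have h' := congrArg (Complex.ofReal) hroot; push_cast at h'; linear_combination h'
      rw [mul_assoc]
      rw [this]
      ring
    · obtain ⟨x, hx, hroot⟩ := quad_pos_root (2*μ + a₂ + d₂ + α₂)
        ((μ + a₂) * (μ + d₂ + α₂) * (1 - R₂))
        (mul_neg_of_pos_of_neg (mul_pos (by linarith) (by linarith)) (by linarith))
      refine ⟨(x:ℂ), ?_, by simpa using hx⟩
      rw [hP]
      have : ((x:ℂ))^2 + (x:ℂ) * ((2*μ + a₂ + d₂ + α₂ : ℝ) : ℂ)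
          + (((μ + a₂) * (μ + d₂ + α₂) * (1 - R₂) : ℝ) : ℂ) = 0 := by
        push_cast
        have h' := congrArg (Complex.ofReal) hroot; push_cast at h'; linear_combination h'
      rw [this]
      ring
end
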